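/- Let Λ be a row-finite k-graph without sources. Then the following are equivalent: (1) for every x ∈ Λ^∞, the shift-equivalence class [x] is a closed subset of Λ^∞ in the cylinder topology; (2) for every x ∈ Λ^∞, every path in Λ^∞ that is frequently divertable to [x] is shift equivalent to x. -/

import Mathlib

/-- A `k`-graph: a countable small category (objects being identified with their
identity morphisms, so that the morphism set `M` carries everything) together with a
degree functor `d : Λ → ℕ^k` satisfying the unique factorisation property. -/
structure KGraph (k : ℕ) : Type 1 where
  M : Type
  countableM : Countable M
  rng : M → M
  src : M → M
  comp : M → M → M
  d : M → Fin k → ℕ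
  src_src : ∀ a, src (src a) = src a
  rng_src : ∀ a, rng (src a) = src a
  src_rng : ∀ a, src (rng a) = rng a
  rng_rng : ∀ a, rng (rng a) = rng a
  comp_src_self : ∀ a, comp a (src a) = a
  rng_comp_self : ∀ a, comp (rng a) a = a
  rng_comp : ∀ a b, src a = rng b → rng (comp a b) = rng a
  src_comp : ∀ a b, src a = rng b → src (comp a b) = src b
  comp_assoc : ∀ a b c, src a = rng b → src b = rng c →
    comp (comp a b) c = comp a (comp b c)
  d_src : ∀ a, d (src a) = 0
  d_comp : ∀ a b, src a = rng b → d (comp a b) = d a + d b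
  factor : ∀ a (m n : Fin k → ℕ), d a = m + n →
    ∃! p : M × M, src p.1 = rng p.2 ∧ comp p.1 p.2 = a ∧ d p.1 = m ∧ d p.2 = n

namespace KGraph

variable {k : ℕ}

/-- The objects of `Λ`, identified with the identity morphisms. -/
def IsObj (Λ : KGraph k) (v : Λ.M) : Prop := Λ.rng v = v

/-- `Λ` is row-finite: each `vΛ^m` is finite. -/
def RowFinite (Λ : KGraph k) : Prop :=
  ∀ v, Λ.IsObj v → ∀ m : Fin k → ℕ, {a : Λ.M | Λ.rng a = v ∧ Λ.d a = m}.Finite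

/-- `Λ` has no sources: each `vΛ^m` is nonempty. -/
def NoSources (Λ : KGraph k) : Prop :=
  ∀ v, Λ.IsObj v → ∀ m : Fin k → ℕ, ∃ a : Λ.M, Λ.rng a = v ∧ Λ.d a = m

end KGraph

/-- An infinite path of a `k`-graph `Λ`: a degree-preserving functor `x : Ω_k → Λ`,
recorded by its values `seg m n _ = x(m, n)` on the morphisms `(m, n)` (for `m ≤ n`)
of `Ω_k`; the vertex `x(m)` is `seg m m _`. -/
structure InfPath {k : ℕ} (Λ : KGraph k) where
  seg : ∀ m n : Fin k → ℕ, m ≤ n → Λ.M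
  d_seg : ∀ m n (h : m ≤ n), Λ.d (seg m n h) = n - m
  rng_seg : ∀ m n (h : m ≤ n), Λ.rng (seg m n h) = seg m m le_rfl
  src_seg : ∀ m n (h : m ≤ n), Λ.src (seg m n h) = seg n n le_rfl
  comp_seg : ∀ m n p (h1 : m ≤ n) (h2 : n ≤ p),
    Λ.comp (seg m n h1) (seg n p h2) = seg m p (h1.trans h2)

namespace InfPath

variable {k : ℕ} {Λ : KGraph k}

/-- The vertex `x(n)` of an infinite path `x`. -/
def vert (x : InfPath Λ) (n : Fin k → ℕ) : Λ.M := x.seg n n le_rfl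

/-- The shift `σ^p(x)`, given by `σ^p(x)(m, n) = x(m + p, n + p)`. -/
def shift (x : InfPath Λ) (p : Fin k → ℕ) : InfPath Λ where
  seg m n h := x.seg (m + p) (n + p) (add_le_add h (le_refl p))
  d_seg m n h := by
    rw [x.d_seg]
    funext i
    simp only [Pi.sub_apply, Pi.add_apply]
    omega
  rng_seg m n h := x.rng_seg _ _ _
  src_seg m n h := x.src_seg _ _ _
  comp_seg m n p' h1 h2 := x.comp_seg _ _ _ _ _

/-- `x` is shift equivalent to `y` with lag `n ∈ ℤ^k`: there are `p, q ∈ ℕ^k` with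
`p - q = n` and `σ^p(x) = σ^q(y)`. -/
def ShiftEquivLag (x y : InfPath Λ) (n : Fin k → ℤ) : Prop :=
  ∃ p q : Fin k → ℕ, (fun i => (p i : ℤ) - (q i : ℤ)) = n ∧ x.shift p = y.shift q

/-- `x` is shift equivalent to `y`. -/
def ShiftEquiv (x y : InfPath Λ) : Prop := ∃ n : Fin k → ℤ, ShiftEquivLag x y n

/-- `x` is frequently divertable to `[y]`: for every `n ∈ ℕ^k` there is a path in
`x(n)Λ^∞` which is shift equivalent to `y`. -/
def FreqDiv (x y : InfPath Λ) : Prop :=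
  ∀ n : Fin k → ℕ, ∃ z : InfPath Λ, z.vert 0 = x.vert n ∧ ShiftEquiv z y

/-- The cylinder topology on `Λ^∞`, generated by the cylinder sets
`Z(α) = {x : x(0, d(α)) = α}` for morphisms `α` of `Λ`. -/
instance : TopologicalSpace (InfPath Λ) :=
  TopologicalSpace.generateFrom
    {S | ∃ a : Λ.M, S = {x : InfPath Λ | x.seg 0 (Λ.d a) zero_le = a}}

end InfPath


/-!
The closure of a shift-equivalence class `[x]` consists exactly of the paths frequently
divertable to `[x]`, so both conditions say that `[x]` equals its closure. Indeed, the
cylinders `Z(y(0, N))` form a neighbourhood basis at `y`. If `z ∈ y(N)Λ^∞` is shift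
equivalent to `x`, then the concatenation `y(0, N) z` lies in `[x] ∩ Z(y(0, N))`;
conversely, if `w ∈ [x]` agrees with `y` on `[0, N]`, then `σ^N(w) ∈ y(N)Λ^∞ ∩ [x]`.
-/

namespace KGraph

variable {k : ℕ} (Λ : KGraph k)

def IsFactorization (a : Λ.M) (m : Fin k → ℕ) (p : Λ.M × Λ.M) : Prop :=
  Λ.src p.1 = Λ.rng p.2 ∧ Λ.comp p.1 p.2 = a ∧ Λ.d p.1 = m

-- An arbitrary pair when `m ≰ d a`; the lemmas below assume `m ≤ d a`.
noncomputable def factorization (a : Λ.M) (m : Fin k → ℕ) : Λ.M × Λ.M :=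
  haveI : Nonempty Λ.M := ⟨a⟩
  Classical.epsilon (Λ.IsFactorization a m)

noncomputable def head (a : Λ.M) (m : Fin k → ℕ) : Λ.M := (Λ.factorization a m).1

noncomputable def tail (a : Λ.M) (m : Fin k → ℕ) : Λ.M := (Λ.factorization a m).2

/-- The segment `a(m, n)` of a morphism `a`, for `m ≤ n ≤ d(a)`. -/
noncomputable def segment (a : Λ.M) (m n : Fin k → ℕ) : Λ.M := Λ.head (Λ.tail a m) (n - m)

variable {Λ}

theorem d_rng (a : Λ.M) : Λ.d (Λ.rng a) = 0 := by
  rw [← Λ.src_rng a, Λ.d_src]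

theorem IsFactorization.unique {a : Λ.M} {m : Fin k → ℕ} {p q : Λ.M × Λ.M}
    (hp : Λ.IsFactorization a m p) (hq : Λ.IsFactorization a m q) : p = q := by
  obtain ⟨hp, rfl, rfl⟩ := hp
  obtain ⟨hq, hqa, hqd⟩ := hq
  have hd : Λ.d q.2 = Λ.d p.2 := by
    have := Λ.d_comp q.1 q.2 hq
    rw [hqa, hqd, Λ.d_comp _ _ hp] at this
    exact (add_left_cancel this).symm
  exact (Λ.factor _ _ _ (Λ.d_comp _ _ hp)).unique ⟨hp, rfl, rfl, rfl⟩ ⟨hq, hqa, hqd, hd⟩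

theorem exists_isFactorization {a : Λ.M} {m : Fin k → ℕ} (h : m ≤ Λ.d a) :
    ∃ p, Λ.IsFactorization a m p :=
  let ⟨p, hp, _⟩ := Λ.factor a m (Λ.d a - m) (add_tsub_cancel_of_le h).symm
  ⟨p, hp.1, hp.2.1, hp.2.2.1⟩

theorem factorization_eq {a : Λ.M} {m : Fin k → ℕ} {p : Λ.M × Λ.M}
    (hp : Λ.IsFactorization a m p) : Λ.factorization a m = p :=
  IsFactorization.unique (Classical.epsilon_spec ⟨p, hp⟩) hp

theorem isFactorization_head_tail {a : Λ.M} {m : Fin k → ℕ} (h : m ≤ Λ.d a) :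
    Λ.IsFactorization a m (Λ.head a m, Λ.tail a m) :=
  haveI : Nonempty Λ.M := ⟨a⟩
  Classical.epsilon_spec (exists_isFactorization h)

theorem head_eq {a p q : Λ.M} {m : Fin k → ℕ} (h : Λ.IsFactorization a m (p, q)) :
    Λ.head a m = p := by
  rw [head, factorization_eq h]

theorem tail_eq {a p q : Λ.M} {m : Fin k → ℕ} (h : Λ.IsFactorization a m (p, q)) :
    Λ.tail a m = q := by
  rw [tail, factorization_eq h]

section Factorization

variable {a b : Λ.M} {m n : Fin k → ℕ}

theorem src_head (h : m ≤ Λ.d a) : Λ.src (Λ.head a m) = Λ.rng (Λ.tail a m) :=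
  (isFactorization_head_tail h).1

theorem comp_head_tail (h : m ≤ Λ.d a) : Λ.comp (Λ.head a m) (Λ.tail a m) = a :=
  (isFactorization_head_tail h).2.1

theorem d_head (h : m ≤ Λ.d a) : Λ.d (Λ.head a m) = m :=
  (isFactorization_head_tail h).2.2

theorem d_tail (h : m ≤ Λ.d a) : Λ.d (Λ.tail a m) = Λ.d a - m := by
  conv_rhs => rw [← comp_head_tail h, Λ.d_comp _ _ (src_head h), d_head h]
  exact (add_tsub_cancel_left m _).symm

theorem rng_head (h : m ≤ Λ.d a) : Λ.rng (Λ.head a m) = Λ.rng a := by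
  conv_rhs => rw [← comp_head_tail h]
  exact (Λ.rng_comp _ _ (src_head h)).symm

theorem src_tail (h : m ≤ Λ.d a) : Λ.src (Λ.tail a m) = Λ.src a := by
  conv_rhs => rw [← comp_head_tail h]
  exact (Λ.src_comp _ _ (src_head h)).symm

theorem head_comp (h : Λ.src a = Λ.rng b) : Λ.head (Λ.comp a b) (Λ.d a) = a :=
  head_eq (q := b) ⟨h, rfl, rfl⟩

theorem tail_comp (h : Λ.src a = Λ.rng b) : Λ.tail (Λ.comp a b) (Λ.d a) = b :=
  tail_eq (p := a) ⟨h, rfl, rfl⟩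

theorem head_zero (a : Λ.M) : Λ.head a 0 = Λ.rng a := by
  simpa only [Λ.rng_comp_self, d_rng] using head_comp (Λ.src_rng a)

theorem tail_zero (a : Λ.M) : Λ.tail a 0 = a := by
  simpa only [Λ.rng_comp_self, d_rng] using tail_comp (Λ.src_rng a)

theorem head_self (a : Λ.M) : Λ.head a (Λ.d a) = a := by
  simpa only [Λ.comp_src_self] using head_comp (Λ.rng_src a).symm

theorem isFactorization_comp_of_le (hab : Λ.src a = Λ.rng b) (h : m ≤ Λ.d a) :
    Λ.IsFactorization (Λ.comp a b) m (Λ.head a m, Λ.comp (Λ.tail a m) b) := by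
  have htb : Λ.src (Λ.tail a m) = Λ.rng b := (src_tail h).trans hab
  refine ⟨?_, ?_, d_head h⟩
  · rw [Λ.rng_comp _ _ htb, src_head h]
  · rw [← Λ.comp_assoc _ _ _ (src_head h) htb, comp_head_tail h]

theorem head_comp_of_le (hab : Λ.src a = Λ.rng b) (h : m ≤ Λ.d a) :
    Λ.head (Λ.comp a b) m = Λ.head a m :=
  head_eq (isFactorization_comp_of_le hab h)

theorem tail_comp_of_le (hab : Λ.src a = Λ.rng b) (h : m ≤ Λ.d a) :
    Λ.tail (Λ.comp a b) m = Λ.comp (Λ.tail a m) b :=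
  tail_eq (isFactorization_comp_of_le hab h)

theorem isFactorization_add (h : m + n ≤ Λ.d a) :
    Λ.IsFactorization a (m + n)
      (Λ.comp (Λ.head a m) (Λ.head (Λ.tail a m) n), Λ.tail (Λ.tail a m) n) := by
  have hm : m ≤ Λ.d a := le_self_add.trans h
  have hn : n ≤ Λ.d (Λ.tail a m) := by rw [d_tail hm]; exact le_tsub_of_add_le_left h
  have hmn : Λ.src (Λ.head a m) = Λ.rng (Λ.head (Λ.tail a m) n) := by
    rw [rng_head hn, src_head hm]
  refine ⟨?_, ?_, ?_⟩
  · rw [Λ.src_comp _ _ hmn, src_head hn]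
  · rw [Λ.comp_assoc _ _ _ hmn (src_head hn), comp_head_tail hn, comp_head_tail hm]
  · rw [Λ.d_comp _ _ hmn, d_head hm, d_head hn]

theorem head_add (h : m + n ≤ Λ.d a) :
    Λ.head a (m + n) = Λ.comp (Λ.head a m) (Λ.head (Λ.tail a m) n) :=
  head_eq (isFactorization_add h)

theorem tail_add (h : m + n ≤ Λ.d a) : Λ.tail a (m + n) = Λ.tail (Λ.tail a m) n :=
  tail_eq (isFactorization_add h)

end Factorization

section Segment

variable {a b : Λ.M} {m n o : Fin k → ℕ}

theorem tsub_le_d_tail (hmn : m ≤ n) (hn : n ≤ Λ.d a) : n - m ≤ Λ.d (Λ.tail a m) := by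
  rw [d_tail (hmn.trans hn)]
  exact tsub_le_tsub_right hn m

theorem d_segment (hmn : m ≤ n) (hn : n ≤ Λ.d a) : Λ.d (Λ.segment a m n) = n - m :=
  d_head (tsub_le_d_tail hmn hn)

theorem segment_self (a : Λ.M) (m : Fin k → ℕ) : Λ.segment a m m = Λ.rng (Λ.tail a m) := by
  rw [segment, tsub_self, head_zero]

theorem rng_segment (hmn : m ≤ n) (hn : n ≤ Λ.d a) :
    Λ.rng (Λ.segment a m n) = Λ.segment a m m := by
  rw [segment, rng_head (tsub_le_d_tail hmn hn), segment_self]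

theorem src_segment (hmn : m ≤ n) (hn : n ≤ Λ.d a) :
    Λ.src (Λ.segment a m n) = Λ.segment a n n := by
  have hm : m + (n - m) ≤ Λ.d a := by rwa [add_tsub_cancel_of_le hmn]
  rw [segment, src_head (tsub_le_d_tail hmn hn), ← tail_add hm, add_tsub_cancel_of_le hmn,
    segment_self]

theorem segment_comp_segment (hmn : m ≤ n) (hno : n ≤ o) (ho : o ≤ Λ.d a) :
    Λ.comp (Λ.segment a m n) (Λ.segment a n o) = Λ.segment a m o := by
  have hm : m ≤ Λ.d a := hmn.trans (hno.trans ho)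
  have hsplit : o - m = (n - m) + (o - n) := by rw [add_comm, tsub_add_tsub_cancel hno hmn]
  have hsum : (n - m) + (o - n) ≤ Λ.d (Λ.tail a m) := by
    rw [← hsplit]; exact tsub_le_d_tail (hmn.trans hno) ho
  have htail : Λ.tail (Λ.tail a m) (n - m) = Λ.tail a n := by
    rw [← tail_add (by rw [add_tsub_cancel_of_le hmn]; exact hno.trans ho),
      add_tsub_cancel_of_le hmn]
  rw [segment, segment, segment, hsplit, head_add hsum, htail]

theorem segment_comp_of_le (hab : Λ.src a = Λ.rng b) (hmn : m ≤ n) (hn : n ≤ Λ.d a) :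
    Λ.segment (Λ.comp a b) m n = Λ.segment a m n := by
  have hm : m ≤ Λ.d a := hmn.trans hn
  rw [segment, segment, tail_comp_of_le hab hm,
    head_comp_of_le ((src_tail hm).trans hab) (tsub_le_d_tail hmn hn)]

theorem segment_comp_add (hab : Λ.src a = Λ.rng b) (hm : m ≤ Λ.d b) :
    Λ.segment (Λ.comp a b) (Λ.d a + m) (Λ.d a + n) = Λ.segment b m n := by
  have h : Λ.d a + m ≤ Λ.d (Λ.comp a b) := by
    rw [Λ.d_comp _ _ hab]; gcongr
  rw [segment, segment, tail_add h, tail_comp hab, add_tsub_add_eq_tsub_left]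

theorem segment_zero_d (a : Λ.M) : Λ.segment a 0 (Λ.d a) = a := by
  rw [segment, tail_zero, tsub_zero, head_self]

end Segment

end KGraph

namespace InfPath

variable {k : ℕ} {Λ : KGraph k}

theorem seg_congr (x : InfPath Λ) {m m' n n' : Fin k → ℕ} (hm : m = m') (hn : n = n')
    (h : m ≤ n) (h' : m' ≤ n') : x.seg m n h = x.seg m' n' h' := by
  subst hm hn; rfl

@[ext]
theorem ext {x y : InfPath Λ} (h : ∀ m n (hmn : m ≤ n), x.seg m n hmn = y.seg m n hmn) :
    x = y := by
  cases x; cases y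
  congr
  funext m n hmn
  exact h m n hmn

theorem d_seg_zero (x : InfPath Λ) (n : Fin k → ℕ) : Λ.d (x.seg 0 n zero_le) = n := by
  rw [x.d_seg, tsub_zero]

theorem seg_eq_segment (x : InfPath Λ) {m n o : Fin k → ℕ} (hmn : m ≤ n) (hno : n ≤ o) :
    x.seg m n hmn = Λ.segment (x.seg 0 o zero_le) m n := by
  have hmo := hmn.trans hno
  have htail : Λ.tail (x.seg 0 o zero_le) m = x.seg m o hmo := by
    have := KGraph.tail_comp ((x.src_seg 0 m zero_le).trans (x.rng_seg m o hmo).symm)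
    rwa [x.comp_seg, d_seg_zero] at this
  rw [KGraph.segment, htail, ← x.comp_seg m n o hmn hno, ← x.d_seg m n hmn,
    KGraph.head_comp ((x.src_seg m n hmn).trans (x.rng_seg n o hno).symm)]

theorem seg_zero_eq_of_le {w y : InfPath Λ} {N N' : Fin k → ℕ} (hN : N ≤ N')
    (h : w.seg 0 N' zero_le = y.seg 0 N' zero_le) : w.seg 0 N zero_le = y.seg 0 N zero_le := by
  rw [w.seg_eq_segment zero_le hN, y.seg_eq_segment zero_le hN, h]

theorem shift_shift (x : InfPath Λ) (p q : Fin k → ℕ) :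
    (x.shift p).shift q = x.shift (q + p) :=
  ext fun m n _ => x.seg_congr (add_assoc m q p) (add_assoc n q p) _ _

theorem shift_zero (x : InfPath Λ) : x.shift 0 = x :=
  ext fun m n _ => x.seg_congr (add_zero m) (add_zero n) _ _

theorem vert_zero_shift (x : InfPath Λ) (p : Fin k → ℕ) : (x.shift p).vert 0 = x.vert p :=
  x.seg_congr (zero_add p) (zero_add p) _ _

theorem shiftEquiv_shift_self (x : InfPath Λ) (p : Fin k → ℕ) : ShiftEquiv (x.shift p) x :=
  ⟨_, 0, p, rfl, by rw [shift_zero]⟩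

theorem ShiftEquiv.trans {x y z : InfPath Λ} (hxy : ShiftEquiv x y) (hyz : ShiftEquiv y z) :
    ShiftEquiv x z := by
  obtain ⟨_, p, q, -, hpq⟩ := hxy
  obtain ⟨_, p', q', -, hpq'⟩ := hyz
  refine ⟨_, p' + p, q + q', rfl, ?_⟩
  calc x.shift (p' + p) = (y.shift p').shift q := by
        rw [← shift_shift, hpq, shift_shift, shift_shift, add_comm]
    _ = z.shift (q + q') := by rw [hpq', shift_shift]

section Concat

variable {α : Λ.M} {z : InfPath Λ}

theorem src_eq_rng_seg (h : Λ.src α = z.vert 0) (n : Fin k → ℕ) :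
    Λ.src α = Λ.rng (z.seg 0 n zero_le) :=
  h.trans (z.rng_seg 0 n zero_le).symm

theorem le_d_comp_seg (h : Λ.src α = z.vert 0) (n : Fin k → ℕ) :
    n ≤ Λ.d (Λ.comp α (z.seg 0 n zero_le)) := by
  rw [Λ.d_comp _ _ (src_eq_rng_seg h n), d_seg_zero]
  exact le_add_self

theorem segment_comp_seg_of_le (h : Λ.src α = z.vert 0) {m n o : Fin k → ℕ} (hmn : m ≤ n)
    (hno : n ≤ o) :
    Λ.segment (Λ.comp α (z.seg 0 o zero_le)) m n =
      Λ.segment (Λ.comp α (z.seg 0 n zero_le)) m n := by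
  have hsrc : Λ.src (Λ.comp α (z.seg 0 n zero_le)) = Λ.rng (z.seg n o hno) := by
    rw [Λ.src_comp _ _ (src_eq_rng_seg h n), z.src_seg, z.rng_seg]
  rw [← z.comp_seg 0 n o zero_le hno,
    ← Λ.comp_assoc _ _ _ (src_eq_rng_seg h n) ((z.src_seg _ _ _).trans (z.rng_seg _ _ _).symm),
    KGraph.segment_comp_of_le hsrc hmn (le_d_comp_seg h n)]

noncomputable def concat (α : Λ.M) (z : InfPath Λ) (h : Λ.src α = z.vert 0) : InfPath Λ where
  seg m n _ := Λ.segment (Λ.comp α (z.seg 0 n zero_le)) m n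
  d_seg m n hmn := KGraph.d_segment hmn (le_d_comp_seg h n)
  rng_seg m n hmn :=
    (KGraph.rng_segment hmn (le_d_comp_seg h n)).trans (segment_comp_seg_of_le h le_rfl hmn)
  src_seg m n hmn := KGraph.src_segment hmn (le_d_comp_seg h n)
  comp_seg m n o hmn hno := by
    rw [← segment_comp_seg_of_le h hmn hno,
      KGraph.segment_comp_segment hmn hno (le_d_comp_seg h o)]

theorem seg_concat (h : Λ.src α = z.vert 0) {n : Fin k → ℕ} (hd : Λ.d α = n) :
    (concat α z h).seg 0 n zero_le = α := by
  change Λ.segment (Λ.comp α (z.seg 0 n zero_le)) 0 n = α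
  rw [KGraph.segment_comp_of_le (src_eq_rng_seg h n) zero_le hd.ge, ← hd,
    KGraph.segment_zero_d]

theorem shift_concat (h : Λ.src α = z.vert 0) : (concat α z h).shift (Λ.d α) = z := by
  ext m n hmn
  change Λ.segment (Λ.comp α (z.seg 0 (n + Λ.d α) zero_le)) (m + Λ.d α) (n + Λ.d α) =
    z.seg m n hmn
  have hm : m ≤ Λ.d (z.seg 0 (Λ.d α + n) zero_le) := by
    rw [d_seg_zero]; exact hmn.trans le_add_self
  rw [add_comm m, add_comm n, KGraph.segment_comp_add (src_eq_rng_seg h _) hm,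
    ← z.seg_eq_segment hmn le_add_self]

theorem concat_shiftEquiv (h : Λ.src α = z.vert 0) : ShiftEquiv (concat α z h) z :=
  ⟨_, Λ.d α, 0, rfl, by rw [shift_concat, shift_zero]⟩

end Concat

theorem isOpen_setOf_seg_eq {a : Λ.M} {n : Fin k → ℕ} (hd : Λ.d a = n) :
    IsOpen {w : InfPath Λ | w.seg 0 n zero_le = a} := by
  subst hd
  exact TopologicalSpace.GenerateOpen.basic _ ⟨a, rfl⟩

theorem exists_setOf_seg_eq_subset {U : Set (InfPath Λ)} (hU : IsOpen U) {y : InfPath Λ}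
    (hy : y ∈ U) : ∃ N, {w : InfPath Λ | w.seg 0 N zero_le = y.seg 0 N zero_le} ⊆ U := by
  induction hU with
  | basic S hS =>
    obtain ⟨a, rfl⟩ := hS
    exact ⟨Λ.d a, fun w hw => hw.trans hy⟩
  | univ => exact ⟨0, Set.subset_univ _⟩
  | inter U V _ _ ihU ihV =>
    obtain ⟨N, hN⟩ := ihU hy.1
    obtain ⟨N', hN'⟩ := ihV hy.2
    exact ⟨N ⊔ N', fun w hw =>
      ⟨hN (seg_zero_eq_of_le le_sup_left hw), hN' (seg_zero_eq_of_le le_sup_right hw)⟩⟩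
  | sUnion s _ ih =>
    obtain ⟨U, hUs, hyU⟩ := hy
    obtain ⟨N, hN⟩ := ih U hUs hyU
    exact ⟨N, fun w hw => ⟨U, hUs, hN hw⟩⟩

theorem mem_closure_iff_forall_seg_eq {S : Set (InfPath Λ)} {y : InfPath Λ} :
    y ∈ closure S ↔ ∀ N, ∃ w ∈ S, w.seg 0 N zero_le = y.seg 0 N zero_le := by
  rw [mem_closure_iff]
  constructor
  · intro h N
    obtain ⟨w, hwN, hwS⟩ := h _ (isOpen_setOf_seg_eq (y.d_seg_zero N)) rfl
    exact ⟨w, hwS, hwN⟩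
  · intro h U hU hy
    obtain ⟨N, hN⟩ := exists_setOf_seg_eq_subset hU hy
    obtain ⟨w, hwS, hwN⟩ := h N
    exact ⟨w, hN hwN, hwS⟩

theorem freqDiv_iff_forall_exists_seg_eq {x y : InfPath Λ} :
    FreqDiv y x ↔ ∀ N, ∃ w, ShiftEquiv w x ∧ w.seg 0 N zero_le = y.seg 0 N zero_le := by
  constructor
  · intro h N
    obtain ⟨z, hz, hzx⟩ := h N
    have hsrc : Λ.src (y.seg 0 N zero_le) = z.vert 0 := (y.src_seg 0 N zero_le).trans hz.symm
    exact ⟨concat _ z hsrc, (concat_shiftEquiv hsrc).trans hzx,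
      seg_concat hsrc (y.d_seg_zero N)⟩
  · intro h N
    obtain ⟨w, hwx, hw⟩ := h N
    refine ⟨w.shift N, ?_, (shiftEquiv_shift_self w N).trans hwx⟩
    rw [vert_zero_shift, vert, ← w.src_seg 0 N zero_le, hw, y.src_seg]
    rfl

theorem mem_closure_setOf_shiftEquiv_iff {x y : InfPath Λ} :
    y ∈ closure {z | ShiftEquiv z x} ↔ FreqDiv y x := by
  rw [mem_closure_iff_forall_seg_eq, freqDiv_iff_forall_exists_seg_eq]
  rfl

end InfPath

theorem stmt8_general {k : ℕ} (Λ : KGraph k) :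
    (∀ x : InfPath Λ, IsClosed {z : InfPath Λ | InfPath.ShiftEquiv z x}) ↔
    (∀ x y : InfPath Λ, InfPath.FreqDiv y x → InfPath.ShiftEquiv y x) := by
  refine forall_congr' fun x => ?_
  rw [← closure_subset_iff_isClosed]
  exact ⟨fun h y hy => h (InfPath.mem_closure_setOf_shiftEquiv_iff.mpr hy),
    fun h y hy => h y (InfPath.mem_closure_setOf_shiftEquiv_iff.mp hy)⟩

/-- For a row-finite `k`-graph `Λ` without sources, the following are equivalent:
(1) every shift-equivalence class `[x]` is closed in `Λ^∞` (cylinder topology);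
(2) for every `x ∈ Λ^∞`, every path in `Λ^∞` that is frequently divertable to `[x]`
is shift equivalent to `x`. -/
theorem stmt8 {k : ℕ} (hk : 1 ≤ k) (Λ : KGraph k) (hrf : Λ.RowFinite)
    (hns : Λ.NoSources) :
    (∀ x : InfPath Λ, IsClosed {z : InfPath Λ | InfPath.ShiftEquiv z x}) ↔
    (∀ x y : InfPath Λ, InfPath.FreqDiv y x → InfPath.ShiftEquiv y x) :=
  stmt8_general Λ
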